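/- There exists an absolute constant c > 0 such that for every integer p ≥ 6, every integer s with 1 ≤ s ≤ p/4, and every real δ > 0, there exist an integer J and vectors v^1, …, v^J ∈ ℝ^p such that: each v^ℓ has at most s nonzero entries and each nonzero entry equals δ/(2·sqrt(s)) or −δ/(2·sqrt(s)); log J ≥ c·s·log(p/s); and for all ℓ1 ≠ ℓ2, δ^2/8 ≤ ‖v^{ℓ1} − v^{ℓ2}‖_2^2 ≤ δ^2. -/

import Mathlib

noncomputable section

open scoped BigOperators

namespace HomoPursuit

open Matrix

/-- Squared Frobenius norm of a real matrix. -/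
def frobSq {m n : Type*} [Fintype m] [Fintype n] (A : Matrix m n ℝ) : ℝ :=
  ∑ i, ∑ j, (A i j) ^ 2

/-- Frobenius norm of a real matrix. -/
def frob {m n : Type*} [Fintype m] [Fintype n] (A : Matrix m n ℝ) : ℝ :=
  Real.sqrt (frobSq A)

/-- Frobenius inner product `⟨A, B⟩ = tr(Aᵀ B)`. -/
def mdot {m n : Type*} [Fintype m] [Fintype n] (A B : Matrix m n ℝ) : ℝ :=
  ∑ i, ∑ j, A i j * B i j

/-- The `j`-th largest singular value of a real matrix (1-indexed); `0` if out of range. -/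
def sval {m n : Type*} [Fintype m] [Fintype n] [DecidableEq n] (A : Matrix m n ℝ) (j : ℕ) : ℝ :=
  (((Finset.univ.val.map fun i =>
      Real.sqrt ((Matrix.isHermitian_conjTranspose_mul_self A).eigenvalues i)).toList.insertionSort
      (· ≥ ·)).getD (j - 1) 0)

/-- Spectral (operator) norm: the largest singular value. -/
def spec {m n : Type*} [Fintype m] [Fintype n] [DecidableEq n] (A : Matrix m n ℝ) : ℝ :=
  sval A 1

/-- The positive-semidefinite square root `(Aᵀ A)^{1/2}` of a Gram matrix. -/
def gramSqrt {m k : Type*} [Fintype m] [Fintype k] [DecidableEq k] (A : Matrix m k ℝ) :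
    Matrix k k ℝ :=
  (Matrix.posSemidef_conjTranspose_mul_self A).1.eigenvectorUnitary.1 *
    Matrix.diagonal (fun i => Real.sqrt
      ((Matrix.posSemidef_conjTranspose_mul_self A).1.eigenvalues i)) *
    (star (Matrix.posSemidef_conjTranspose_mul_self A).1.eigenvectorUnitary : Matrix k k ℝ)

/-- `(Aᵀ A)^{-1/2}`. -/
def invGramSqrt {m k : Type*} [Fintype m] [Fintype k] [DecidableEq k] (A : Matrix m k ℝ) :
    Matrix k k ℝ :=
  (gramSqrt A)⁻¹

/-- Square root of a diagonal matrix with given (nonnegative) diagonal entries. -/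
def diagSqrt {k : ℕ} (d : Fin k → ℝ) : Matrix (Fin k) (Fin k) ℝ :=
  Matrix.diagonal fun j => Real.sqrt (d j)

/-!
Put `m = ⌊p/s⌋ ≥ 4`. By the Gilbert–Varshamov argument (a code of maximal size is a covering, and
Hamming balls of radius `r` in `Aˢ` have at most `2ˢ |A|ʳ` points) there is a code
`C ⊆ (Fin m × Bool)ˢ` of minimum distance `> s/4` with `(2m)ˢ ≤ |C| 2ˢ (2m)^(s/4)`, whence
`log |C| ≥ (5/12) s log (2m) ≥ (1/4) s log (p/s)`. A word `x` becomes the vector with `s` blocks of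
length `m`, block `b` having the single entry `±δ/(2√s)` at position `(x b).1`, with sign `(x b).2`.
Two blocks that differ contribute `2` or `4` times `δ²/(4s)` to the squared distance, so words at
Hamming distance `d ∈ (s/4, s]` give vectors at squared distance between `δ²/8` and `δ²`.
-/

open Finset

section HammingCode

theorem sum_ite_eq_zero_eq_hammingDist_mul {ι α : Type*} [Fintype ι] [DecidableEq α]
    (x y : ι → α) (c : ℝ) : ∑ i, (if x i = y i then 0 else c) = hammingDist x y * c := by
  simp [hammingDist, sum_ite]

variable {ι α : Type*} [Fintype ι] [DecidableEq ι] [Fintype α] [DecidableEq α]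

theorem card_hammingBall_le [Nonempty α] (c : ι → α) (r : ℕ) :
    #{y : ι → α | hammingDist y c ≤ r} ≤ 2 ^ Fintype.card ι * Fintype.card α ^ r := by
  -- `y` is pinned down by its values on the set where it differs from `c`
  have hcover : ({y | hammingDist y c ≤ r} : Finset (ι → α)) ⊆
      ({T | #T ≤ r} : Finset (Finset ι)).biUnion
        fun T => Fintype.piFinset fun i => if i ∈ T then univ else {c i} := by
    intro y hy
    refine mem_biUnion.2 ⟨({i | y i ≠ c i} : Finset ι), by simpa [hammingDist] using hy, ?_⟩
    simp only [Fintype.mem_piFinset]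
    intro i
    split_ifs with h <;> simp_all
  calc _ ≤ _ := card_le_card hcover
    _ ≤ ∑ T ∈ ({T | #T ≤ r} : Finset (Finset ι)), Fintype.card α ^ r := by
        refine card_biUnion_le.trans (sum_le_sum fun T hT => ?_)
        simp only [Fintype.card_piFinset, apply_ite Finset.card, card_univ, card_singleton,
          prod_ite_mem, univ_inter, prod_const]
        exact Nat.pow_le_pow_right Fintype.card_pos (mem_filter.1 hT).2
    _ ≤ 2 ^ Fintype.card ι * Fintype.card α ^ r := by
        rw [sum_const, smul_eq_mul, ← Fintype.card_finset]
        exact Nat.mul_le_mul_right _ (card_filter_le _ _)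

theorem exists_code_of_card_hammingBall_le (r B : ℕ)
    (hB : ∀ c : ι → α, #{y : ι → α | hammingDist y c ≤ r} ≤ B) :
    ∃ C : Finset (ι → α), (C : Set (ι → α)).Pairwise (fun x y => r < hammingDist x y) ∧
      Fintype.card α ^ Fintype.card ι ≤ #C * B := by
  obtain ⟨C, hC, hmax⟩ := exists_max_image
    {C : Finset (ι → α) | (C : Set (ι → α)).Pairwise (fun x y => r < hammingDist x y)} card
    ⟨∅, by simp⟩
  rw [mem_filter] at hC
  refine ⟨C, hC.2, ?_⟩
  have hcovering : ∀ x : ι → α, ∃ c ∈ C, hammingDist x c ≤ r := by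
    intro x
    by_contra! hfar
    have hx : x ∉ C := fun hx => by simpa using hfar x hx
    have hlarger := hmax (insert x C) <| by
      rw [mem_filter, coe_insert]
      refine ⟨mem_univ _, hC.2.insert fun c hc _ => ⟨hfar c hc, ?_⟩⟩
      rw [hammingDist_comm]
      exact hfar c hc
    rw [card_insert_of_notMem hx] at hlarger
    omega
  calc Fintype.card α ^ Fintype.card ι = #(univ : Finset (ι → α)) := by simp
    _ ≤ #(C.biUnion fun c => {y : ι → α | hammingDist y c ≤ r}) :=
        card_le_card fun x _ => by simpa using hcovering x
    _ ≤ ∑ c ∈ C, #{y : ι → α | hammingDist y c ≤ r} := card_biUnion_le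
    _ ≤ #C * B := by simpa using sum_le_sum fun c _ => hB c

end HammingCode

section SignedBlocks

variable {ι κ : Type*} [DecidableEq κ]

def signedSingle (a : ℝ) (x : κ × Bool) : κ → ℝ :=
  Pi.single x.1 (if x.2 then a else -a)

theorem sum_sq_sub_signedSingle [Fintype κ] (a : ℝ) (x y : κ × Bool) :
    ∑ j, (signedSingle a x j - signedSingle a y j) ^ 2 =
      if x = y then 0 else if x.1 = y.1 then 4 * a ^ 2 else 2 * a ^ 2 := by
  obtain ⟨i, σ⟩ := x
  obtain ⟨j, τ⟩ := y
  by_cases hij : i = j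
  · subst hij
    rw [Fintype.sum_eq_single i fun k hk => by simp [signedSingle, hk]]
    cases σ <;> cases τ <;> simp [signedSingle] <;> ring
  · rw [Fintype.sum_eq_add i j hij fun k hk => by simp [signedSingle, hk.1, hk.2]]
    simp [signedSingle, hij, Ne.symm hij]
    ring

def signedBlockVec (a : ℝ) (x : ι → κ × Bool) : ι × κ → ℝ :=
  fun b => signedSingle a (x b.1) b.2

theorem sum_sq_sub_signedBlockVec_mem_Icc [Fintype ι] [Fintype κ] (a : ℝ) (x y : ι → κ × Bool) :
    ∑ b, (signedBlockVec a x b - signedBlockVec a y b) ^ 2 ∈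
      Set.Icc (2 * a ^ 2 * hammingDist x y) (4 * a ^ 2 * hammingDist x y) := by
  simp only [Fintype.sum_prod_type, signedBlockVec, sum_sq_sub_signedSingle]
  rw [mul_comm (2 * a ^ 2), mul_comm (4 * a ^ 2), ← sum_ite_eq_zero_eq_hammingDist_mul,
    ← sum_ite_eq_zero_eq_hammingDist_mul]
  have ha : 0 ≤ a ^ 2 := sq_nonneg a
  constructor <;> refine sum_le_sum fun i _ => ?_ <;> split_ifs <;> linarith

theorem sum_sq_sub_signedBlockVec_normalized_mem_Icc [Fintype ι] [Fintype κ] (δ : ℝ)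
    {x y : ι → κ × Bool} (hxy : Fintype.card ι / 4 < hammingDist x y) :
    ∑ b, (signedBlockVec (δ / (2 * √(Fintype.card ι))) x b -
      signedBlockVec (δ / (2 * √(Fintype.card ι))) y b) ^ 2 ∈ Set.Icc (δ ^ 2 / 8) (δ ^ 2) := by
  set n := Fintype.card ι
  have hd : hammingDist x y ≤ n := hammingDist_le_card_fintype
  have hn : (0 : ℝ) < n := by exact_mod_cast (by omega : 0 < n)
  obtain ⟨hlo, hhi⟩ := sum_sq_sub_signedBlockVec_mem_Icc (δ / (2 * √n)) x y
  rw [div_pow, mul_pow, Real.sq_sqrt hn.le] at hlo hhi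
  constructor
  · calc δ ^ 2 / 8 = 2 * (δ ^ 2 / (2 ^ 2 * n)) * (n / 4) := by field_simp; ring
      _ ≤ 2 * (δ ^ 2 / (2 ^ 2 * n)) * hammingDist x y := by
          gcongr
          rw [div_le_iff₀ four_pos]
          exact_mod_cast (by omega : n ≤ hammingDist x y * 4)
      _ ≤ _ := hlo
  · calc _ ≤ 4 * (δ ^ 2 / (2 ^ 2 * n)) * hammingDist x y := hhi
      _ ≤ 4 * (δ ^ 2 / (2 ^ 2 * n)) * n := by gcongr
      _ = δ ^ 2 := by field_simp; ring

theorem ncard_signedBlockVec_ne_zero_le [Fintype ι] (a : ℝ) (x : ι → κ × Bool) :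
    {b | signedBlockVec a x b ≠ 0}.ncard ≤ Fintype.card ι := by
  have hsub : {b | signedBlockVec a x b ≠ 0} ⊆ Set.range fun i => (i, (x i).1) := by
    rintro ⟨i, j⟩ hb
    by_cases hj : j = (x i).1
    · exact ⟨i, by rw [hj]⟩
    · simp [signedBlockVec, signedSingle, hj] at hb
  calc _ ≤ (Set.range fun i => (i, (x i).1)).ncard := Set.ncard_le_ncard hsub
    _ = Fintype.card ι := by
        rw [Set.ncard_range_of_injective fun i i' h => (Prod.ext_iff.1 h).1,
          Nat.card_eq_fintype_card]

theorem signedBlockVec_eq_of_ne_zero {a : ℝ} {x : ι → κ × Bool} {b : ι × κ}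
    (hb : signedBlockVec a x b ≠ 0) : signedBlockVec a x b = a ∨ signedBlockVec a x b = -a := by
  simp only [signedBlockVec, signedSingle, Pi.single_apply] at hb ⊢
  split_ifs at hb ⊢ <;> simp_all

end SignedBlocks

section ExtendByZero

variable {κ ι : Type*} {e : κ → ι}

theorem sum_sq_sub_extend_zero [Fintype κ] [Fintype ι] (he : e.Injective) (f g : κ → ℝ) :
    ∑ i, (Function.extend e f 0 i - Function.extend e g 0 i) ^ 2 = ∑ k, (f k - g k) ^ 2 :=
  (Fintype.sum_of_injective e he _ _
    (fun i hi => by simp [Function.extend_apply' _ _ _ (by simpa using hi)])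
    (fun k => by simp [he.extend_apply])).symm

theorem ncard_extend_zero_ne_zero (he : e.Injective) (f : κ → ℝ) :
    {i | Function.extend e f 0 i ≠ 0}.ncard = {k | f k ≠ 0}.ncard := by
  rw [← Set.ncard_image_of_injective _ he]
  congr 1
  ext i
  by_cases h : ∃ k, e k = i
  · obtain ⟨k, rfl⟩ := h
    simp [he.extend_apply, he.eq_iff]
  · simpa [Function.extend_apply' _ _ _ h] using fun k _ hk => h ⟨k, hk⟩

theorem exists_extend_zero_eq_of_ne_zero {f : κ → ℝ} {i : ι}
    (hi : Function.extend e f 0 i ≠ 0) : ∃ k, Function.extend e f 0 i = f k := by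
  classical
  rw [Function.extend_def] at hi ⊢
  split_ifs at hi ⊢
  · exact ⟨_, rfl⟩
  · exact absurd rfl hi

end ExtendByZero

theorem mul_log_le_log_of_pow_le {J q s r : ℕ} {x : ℝ} (hq : 8 ≤ q) (hr : 4 * r ≤ s)
    (hx : 0 < x) (hxq : x ≤ q) (h : q ^ s ≤ J * (2 ^ s * q ^ r)) :
    1 / 4 * s * Real.log x ≤ Real.log J := by
  have hJ : (0 : ℝ) < J := by
    have : 0 < J * (2 ^ s * q ^ r) := lt_of_lt_of_le (by positivity) h
    exact_mod_cast Nat.pos_of_mul_pos_right this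
  have hlog := Real.log_le_log (by positivity)
    (show ((q : ℝ) ^ s ≤ J * (2 ^ s * q ^ r)) by exact_mod_cast h)
  rw [Real.log_mul hJ.ne' (by positivity), Real.log_mul (by positivity) (by positivity),
    Real.log_pow, Real.log_pow, Real.log_pow] at hlog
  have hlog2 : 3 * Real.log 2 ≤ Real.log q := by
    rw [← Real.log_rpow two_pos]
    exact Real.log_le_log (by norm_num) (by norm_num; exact_mod_cast hq)
  have hlogq : 0 ≤ Real.log q := by linarith [Real.log_nonneg one_le_two]
  have hr' : (r : ℝ) * Real.log q ≤ s / 4 * Real.log q := by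
    refine mul_le_mul_of_nonneg_right ?_ hlogq
    rw [le_div_iff₀ four_pos]
    exact_mod_cast (by omega : r * 4 ≤ s)
  have hs2 : (s : ℝ) * Real.log 2 ≤ s * (Real.log q / 3) :=
    mul_le_mul_of_nonneg_left (by linarith) (Nat.cast_nonneg s)
  have hsx : (s : ℝ) * Real.log x ≤ s * Real.log q :=
    mul_le_mul_of_nonneg_left (Real.log_le_log hx hxq) (Nat.cast_nonneg s)
  have hsq : 0 ≤ (s : ℝ) * Real.log q := mul_nonneg (Nat.cast_nonneg s) hlogq
  linarith

theorem cast_div_le_nat_div_mul_two {p s : ℕ} (hs : 0 < s) (hsp : s ≤ p) :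
    (p : ℝ) / s ≤ (p / s * 2 : ℕ) := by
  rw [div_le_iff₀ (by positivity)]
  have hp : p < s * (p / s + 1) := Nat.lt_mul_div_succ p hs
  have hq : 1 ≤ p / s := (Nat.one_le_div_iff hs).2 hsp
  exact_mod_cast (by nlinarith : p ≤ p / s * 2 * s)

/-- **Lemma (packing of the sparse hypercube).** -/
theorem sparse_hypercube_packing :
    ∃ c : ℝ, 0 < c ∧
      ∀ p s : ℕ, 6 ≤ p → 1 ≤ s → 4 * s ≤ p →
      ∀ δ : ℝ, 0 < δ →
      ∃ (J : ℕ) (v : Fin J → Fin p → ℝ),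
        (∀ l, Set.ncard {i | v l i ≠ 0} ≤ s) ∧
        (∀ l i, v l i ≠ 0 →
          v l i = δ / (2 * Real.sqrt s) ∨ v l i = -(δ / (2 * Real.sqrt s))) ∧
        c * s * Real.log ((p : ℝ) / s) ≤ Real.log J ∧
        ∀ l1 l2 : Fin J, l1 ≠ l2 →
          δ ^ 2 / 8 ≤ ∑ i, (v l1 i - v l2 i) ^ 2 ∧
            ∑ i, (v l1 i - v l2 i) ^ 2 ≤ δ ^ 2 := by
  refine ⟨1 / 4, by norm_num, fun p s _ hs hsp δ _ => ?_⟩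
  set m := p / s
  have hm : 4 ≤ m := (Nat.le_div_iff_mul_le hs).2 (by omega)
  have : NeZero m := ⟨by omega⟩
  obtain ⟨C, hC, hcard⟩ := exists_code_of_card_hammingBall_le (ι := Fin s) (α := Fin m × Bool)
    (s / 4) _ fun c => card_hammingBall_le c _
  simp only [Fintype.card_prod, Fintype.card_fin, Fintype.card_bool] at hcard
  let w : Fin #C → Fin s → Fin m × Bool := Subtype.val ∘ C.equivFin.symm
  have hw : w.Injective := Subtype.val_injective.comp C.equivFin.symm.injective
  let e : Fin s × Fin m → Fin p := Fin.castLE (Nat.mul_div_le p s) ∘ finProdFinEquiv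
  have he : e.Injective := (Fin.castLE_injective _).comp finProdFinEquiv.injective
  refine ⟨#C, fun l => Function.extend e (signedBlockVec (δ / (2 * √s)) (w l)) 0,
    fun l => ?_, fun l i hi => ?_, ?_, fun l1 l2 hl => ?_⟩
  · rw [ncard_extend_zero_ne_zero he]
    simpa using ncard_signedBlockVec_ne_zero_le _ (w l)
  · obtain ⟨b, hb⟩ := exists_extend_zero_eq_of_ne_zero hi
    simp only [hb] at hi ⊢
    exact signedBlockVec_eq_of_ne_zero hi
  · exact mul_log_le_log_of_pow_le (by omega) (Nat.mul_div_le s 4) (by positivity)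
      (cast_div_le_nat_div_mul_two hs (by omega)) hcard
  · rw [sum_sq_sub_extend_zero he]
    have hdist : Fintype.card (Fin s) / 4 < hammingDist (w l1) (w l2) := by
      rw [Fintype.card_fin]
      exact hC (C.equivFin.symm l1).2 (C.equivFin.symm l2).2 (hw.ne hl)
    simpa using sum_sq_sub_signedBlockVec_normalized_mem_Icc δ hdist

end HomoPursuit
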